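/- The unconstrained maximizer of F(X) = Σ_{w,c} [a_{w,c}·log σ(x_{w,c}) + b_{w,c}·log σ(−x_{w,c})] over X ∈ ℝ^{n×m} with all a_{w,c}, b_{w,c} > 0 is the matrix with entries x*_{w,c} = log(a_{w,c}/b_{w,c}), and it is the unique global maximizer. -/

import Mathlib

noncomputable def sigmoid (x : ℝ) : ℝ := 1 / (1 + Real.exp (-x))

/-!
Entrywise, with `q = σ(x)` and `σ(-x) = 1 - q`, the summand `a log σ(x) + b log σ(-x)` is
`a log q + b log (1 - q)`. By Gibbs' inequality (`log t < t - 1` for `t ≠ 1`) this is strictly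
maximal at `q = a / (a + b)`, and `σ(log (a / b)) = a / (a + b)`; as `σ` is injective, the
maximizer `x = log (a / b)` is unique, and a sum of such summands is maximal exactly when every
entry is.
-/

theorem sigmoid_eq_real_sigmoid : sigmoid = Real.sigmoid := by
  funext x
  rw [sigmoid, Real.sigmoid_def, one_div]

theorem sigmoid_log_div {a b : ℝ} (ha : 0 < a) (hb : 0 < b) :
    sigmoid (Real.log (a / b)) = a / (a + b) := by
  rw [sigmoid, Real.exp_neg, Real.exp_log (div_pos ha hb)]
  field_simp

theorem sigmoid_neg_log_div {a b : ℝ} (ha : 0 < a) (hb : 0 < b) :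
    sigmoid (-Real.log (a / b)) = b / (a + b) := by
  rw [← Real.log_inv, inv_div, sigmoid_log_div hb ha, add_comm]

theorem mul_log_add_mul_log_one_sub_lt {a b q : ℝ} (ha : 0 < a) (hb : 0 < b)
    (hq₀ : 0 < q) (hq₁ : q < 1) (hq : q ≠ a / (a + b)) :
    a * Real.log q + b * Real.log (1 - q) <
      a * Real.log (a / (a + b)) + b * Real.log (b / (a + b)) := by
  have hab : 0 < a + b := add_pos ha hb
  have hq' : 0 < 1 - q := sub_pos.2 hq₁
  have hfirst : a * (Real.log q - Real.log (a / (a + b))) < (a + b) * q - a := by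
    rw [← Real.log_div hq₀.ne' (by positivity)]
    calc a * Real.log (q / (a / (a + b)))
        < a * (q / (a / (a + b)) - 1) := by
          refine mul_lt_mul_of_pos_left (Real.log_lt_sub_one_of_pos (by positivity) ?_) ha
          rwa [ne_eq, div_eq_one_iff_eq (by positivity)]
      _ = (a + b) * q - a := by field_simp
  have hsecond : b * (Real.log (1 - q) - Real.log (b / (a + b))) ≤ (a + b) * (1 - q) - b := by
    rw [← Real.log_div hq'.ne' (by positivity)]
    calc b * Real.log ((1 - q) / (b / (a + b)))
        ≤ b * ((1 - q) / (b / (a + b)) - 1) :=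
          mul_le_mul_of_nonneg_left (Real.log_le_sub_one_of_pos (by positivity)) hb.le
      _ = (a + b) * (1 - q) - b := by field_simp
  linarith

noncomputable def sgnsTerm (a b x : ℝ) : ℝ :=
  a * Real.log (sigmoid x) + b * Real.log (sigmoid (-x))

theorem sgnsTerm_lt {a b x : ℝ} (ha : 0 < a) (hb : 0 < b) (hx : x ≠ Real.log (a / b)) :
    sgnsTerm a b x < sgnsTerm a b (Real.log (a / b)) := by
  have hσx : sigmoid x ≠ a / (a + b) := by
    rw [← sigmoid_log_div ha hb, sigmoid_eq_real_sigmoid, ne_eq, Real.sigmoid_inj]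
    exact hx
  rw [sgnsTerm, sgnsTerm, sigmoid_log_div ha hb, sigmoid_neg_log_div ha hb,
    sigmoid_eq_real_sigmoid, Real.sigmoid_neg]
  rw [sigmoid_eq_real_sigmoid] at hσx
  exact mul_log_add_mul_log_one_sub_lt ha hb (Real.sigmoid_pos x) (Real.sigmoid_lt_one x) hσx

theorem sgnsTerm_le {a b : ℝ} (x : ℝ) (ha : 0 < a) (hb : 0 < b) :
    sgnsTerm a b x ≤ sgnsTerm a b (Real.log (a / b)) := by
  rcases eq_or_ne x (Real.log (a / b)) with rfl | hx
  · exact le_rfl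
  · exact (sgnsTerm_lt ha hb hx).le

theorem sum_sum_lt_sum_sum {ι κ : Type*} [Fintype ι] [Fintype κ] {f g : ι → κ → ℝ}
    (hle : ∀ i j, f i j ≤ g i j) (hlt : ∃ i j, f i j < g i j) :
    ∑ i, ∑ j, f i j < ∑ i, ∑ j, g i j := by
  obtain ⟨i, j, hij⟩ := hlt
  refine Finset.sum_lt_sum (fun i _ ↦ Finset.sum_le_sum fun j _ ↦ hle i j)
    ⟨i, Finset.mem_univ i, ?_⟩
  exact Finset.sum_lt_sum (fun j _ ↦ hle i j) ⟨j, Finset.mem_univ j, hij⟩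

theorem sgns_objective_unique_max (n m : ℕ)
    (a b : Fin n → Fin m → ℝ)
    (ha : ∀ w c, 0 < a w c) (hb : ∀ w c, 0 < b w c)
    (F : Matrix (Fin n) (Fin m) ℝ → ℝ)
    (hF : ∀ X, F X = ∑ w : Fin n, ∑ c : Fin m,
      (a w c * Real.log (sigmoid (X w c)) + b w c * Real.log (sigmoid (-(X w c)))))
    (Xstar : Matrix (Fin n) (Fin m) ℝ)
    (hXstar : ∀ w c, Xstar w c = Real.log (a w c / b w c)) :
    ∀ X : Matrix (Fin n) (Fin m) ℝ, X ≠ Xstar → F X < F Xstar := by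
  intro X hX
  obtain ⟨w, hw⟩ := Function.ne_iff.1 hX
  obtain ⟨c, hwc⟩ := Function.ne_iff.1 hw
  rw [hF, hF]
  simp only [hXstar] at hwc ⊢
  exact sum_sum_lt_sum_sum (fun w c ↦ sgnsTerm_le (X w c) (ha w c) (hb w c))
    ⟨w, c, sgnsTerm_lt (ha w c) (hb w c) hwc⟩
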